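/- Let Z_1, …, Z_N be i.i.d. observations from a probability measure μ on ℝ^d, independent of a random measurable function f_N: ℝ^d → ℝ. Suppose f_N → f in L²(μ) in probability for some f ∈ L²(μ), and suppose for every η > 0 there exist L < ∞ and a deterministic envelope G with G² ∈ L¹(μ) such that P(|f_N| ≤ L·G pointwise) ≥ 1 − η for all large N. Then N^{-1} Σ_{i=1}^N f_N(Z_i) − ∫ f_N dμ → 0 in probability and N^{-1} Σ_{i=1}^N f_N(Z_i)² − ∫ f_N² dμ → 0 in probability as N → ∞. -/

import Mathlib

/-
Conditionally on the random function, the sample average is an empirical mean of i.i.d.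
variables. Truncating at a level `K`, the clamped part has variance at most `K²/N`
(Chebyshev), while the remainder is controlled in `L¹` (Markov) by the envelope's tail
`∫ (H - K)⁺ dμ`; both bounds are uniform over all functions dominated by the envelope `H`.
Integrating this slice bound over the event where `f_N` is dominated (Fubini on the product
space) and choosing first `K` and then `N` large gives convergence in probability. For `f_N²`
the same argument runs with the envelope `L² G²`.
-/

open MeasureTheory ProbabilityTheory Filter Topology
open scoped ENNReal

lemma abs_sub_clamp_le {a b K : ℝ} (hK : 0 ≤ K) (hab : |a| ≤ b) :
    |a - max (min a K) (-K)| ≤ max (b - K) 0 := by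
  rw [abs_le] at hab ⊢
  constructor <;> grind

lemma tendsto_integral_max_sub_atTop_zero {E : Type*} [MeasurableSpace E] {μ : Measure E}
    {H : E → ℝ} (hH : Integrable H μ) :
    Tendsto (fun K : ℝ => ∫ x, max (H x - K) 0 ∂μ) atTop (𝓝 0) := by
  have := tendsto_integral_filter_of_dominated_convergence (μ := μ) (l := atTop)
    (F := fun (K : ℝ) x => max (H x - K) 0) (f := fun _ => 0) (fun x => |H x|) ?_ ?_ hH.abs ?_
  · simpa using this
  · exact Eventually.of_forall fun K =>
      (hH.aestronglyMeasurable.sub aestronglyMeasurable_const).sup aestronglyMeasurable_const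
  · filter_upwards [eventually_ge_atTop 0] with K hK
    refine Eventually.of_forall fun x => ?_
    rw [Real.norm_eq_abs, abs_of_nonneg (le_max_right _ _)]
    exact max_le (by linarith [le_abs_self (H x)]) (abs_nonneg _)
  · refine Eventually.of_forall fun x => tendsto_const_nhds.congr' ?_
    filter_upwards [eventually_ge_atTop (H x)] with K hK
    exact (max_eq_right (by linarith)).symm

lemma ENNReal.tendsto_nhds_zero_of_eventually_le_ofReal {ι : Type*} {l : Filter ι} {u : ι → ℝ≥0∞}
    (h : ∀ η : ℝ, 0 < η → ∀ᶠ i in l, u i ≤ ENNReal.ofReal η) : Tendsto u l (𝓝 0) := by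
  refine ENNReal.tendsto_nhds_zero.2 fun ε hε => ?_
  obtain ⟨η, -, hη, hηε⟩ := ENNReal.lt_iff_exists_real_btwn.1 hε
  exact (h η (ENNReal.ofReal_pos.1 hη)).mono fun i hi => hi.trans hηε.le

lemma integrable_abs_of_integrable_sq {E : Type*} [MeasurableSpace E] {μ : Measure E}
    [IsFiniteMeasure μ] {G : E → ℝ} (hG : Integrable (fun x => G x ^ 2) μ) :
    Integrable (fun x => |G x|) μ := by
  have hmeas : AEStronglyMeasurable (fun x => |G x|) μ := by
    simpa only [Real.sqrt_sq_eq_abs] using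
      Real.continuous_sqrt.comp_aestronglyMeasurable hG.aestronglyMeasurable
  exact ((memLp_two_iff_integrable_sq hmeas).2 (by simpa only [sq_abs] using hG)).integrable
    one_le_two

noncomputable def empiricalMean {E Ω : Type*} (Z : ℕ → Ω → E) (N : ℕ) (g : E → ℝ) (ω : Ω) : ℝ :=
  (N : ℝ)⁻¹ * ∑ i ∈ Finset.range N, g (Z i ω)

noncomputable def empiricalDeviation {E Ω : Type*} [MeasurableSpace E] (μ : Measure E)
    (Z : ℕ → Ω → E) (N : ℕ) (g : E → ℝ) (ω : Ω) : ℝ :=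
  empiricalMean Z N g ω - ∫ x, g x ∂μ

lemma empiricalDeviation_add {E Ω : Type*} [MeasurableSpace E] {μ : Measure E} {Z : ℕ → Ω → E}
    {N : ℕ} {g h : E → ℝ} (hg : Integrable g μ) (hh : Integrable h μ) (ω : Ω) :
    empiricalDeviation μ Z N (fun x => g x + h x) ω =
      empiricalDeviation μ Z N g ω + empiricalDeviation μ Z N h ω := by
  simp only [empiricalDeviation, empiricalMean, Finset.sum_add_distrib, integral_add hg hh]
  ring

section

variable {E Ω : Type*} [MeasurableSpace E] [MeasurableSpace Ω] {μ : Measure E} {P : Measure Ω}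
  {Z : ℕ → Ω → E}

lemma integral_comp_eq_of_map_eq {X : Ω → E} (hX : AEMeasurable X P) (hlaw : P.map X = μ)
    {g : E → ℝ} (hg : AEStronglyMeasurable g μ) : ∫ ω, g (X ω) ∂P = ∫ x, g x ∂μ := by
  subst hlaw
  exact (integral_map hX hg).symm

lemma integrable_comp_of_map_eq {X : Ω → E} (hX : AEMeasurable X P) (hlaw : P.map X = μ)
    {g : E → ℝ} (hg : Integrable g μ) : Integrable (fun ω => g (X ω)) P := by
  subst hlaw
  exact hg.comp_aemeasurable hX

lemma integrable_empiricalMean (hZ : ∀ i, AEMeasurable (Z i) P) (hlaw : ∀ i, P.map (Z i) = μ)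
    {g : E → ℝ} (hg : Integrable g μ) (N : ℕ) : Integrable (empiricalMean Z N g) P :=
  (integrable_finsetSum _ fun i _ => integrable_comp_of_map_eq (hZ i) (hlaw i) hg).const_mul _

lemma integral_empiricalMean (hZ : ∀ i, AEMeasurable (Z i) P) (hlaw : ∀ i, P.map (Z i) = μ)
    {g : E → ℝ} (hg : Integrable g μ) {N : ℕ} (hN : 0 < N) :
    ∫ ω, empiricalMean Z N g ω ∂P = ∫ x, g x ∂μ := by
  simp only [empiricalMean]
  rw [integral_const_mul,
    integral_finsetSum _ fun i _ => integrable_comp_of_map_eq (hZ i) (hlaw i) hg]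
  simp only [fun i => integral_comp_eq_of_map_eq (hZ i) (hlaw i) hg.aestronglyMeasurable,
    Finset.sum_const, Finset.card_range, nsmul_eq_mul]
  field_simp

lemma meas_abs_empiricalDeviation_ge_le_of_abs_le [IsProbabilityMeasure P]
    (hZm : ∀ i, Measurable (Z i)) (hZind : iIndepFun Z P) (hlaw : ∀ i, P.map (Z i) = μ)
    {g : E → ℝ} (hgm : Measurable g) {K : ℝ} (hgK : ∀ x, |g x| ≤ K) {N : ℕ} (hN : 0 < N)
    {t : ℝ} (ht : 0 < t) :
    P {ω | t ≤ |empiricalDeviation μ Z N g ω|} ≤ ENNReal.ofReal (K ^ 2 / (N * t ^ 2)) := by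
  have : IsProbabilityMeasure μ := hlaw 0 ▸ Measure.isProbabilityMeasure_map (hZm 0).aemeasurable
  set X : ℕ → Ω → ℝ := fun i ω => g (Z i ω)
  have hX : ∀ i, MemLp (X i) 2 P := fun i =>
    MemLp.of_bound (hgm.comp (hZm i)).aestronglyMeasurable K (ae_of_all _ fun ω => hgK _)
  have hvarX : ∀ i, variance (X i) P ≤ K ^ 2 := fun i => by
    refine (variance_le_sq_of_bounded (ae_of_all _ fun ω => abs_le.1 (hgK (Z i ω)))
      (hgm.comp (hZm i)).aemeasurable).trans (le_of_eq ?_)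
    ring
  have hmean : empiricalMean Z N g = fun ω => (N : ℝ)⁻¹ * (∑ i ∈ Finset.range N, X i) ω := by
    ext ω
    simp only [empiricalMean, Finset.sum_apply, X]
  have hvar : variance (empiricalMean Z N g) P ≤ K ^ 2 / N := by
    rw [hmean, variance_const_mul, IndepFun.variance_sum (fun i _ => hX i)
      fun i _ j _ hij => (hZind.comp (fun _ => g) fun _ => hgm).indepFun hij]
    calc ((N : ℝ)⁻¹) ^ 2 * ∑ i ∈ Finset.range N, variance (X i) P
        ≤ ((N : ℝ)⁻¹) ^ 2 * (N * K ^ 2) := by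
          gcongr
          simpa using Finset.sum_le_sum fun i (_ : i ∈ Finset.range N) => hvarX i
      _ = K ^ 2 / N := by field_simp
  have hdev : empiricalDeviation μ Z N g =
      fun ω => empiricalMean Z N g ω - P[empiricalMean Z N g] := by
    rw [integral_empiricalMean (fun i => (hZm i).aemeasurable) hlaw
      (.of_bound hgm.aestronglyMeasurable K (ae_of_all _ hgK)) hN]
    rfl
  have hmemLp : MemLp (empiricalMean Z N g) 2 P :=
    hmean ▸ (memLp_finsetSum' _ fun i _ => hX i).const_mul _
  rw [hdev]
  refine (meas_ge_le_variance_div_sq hmemLp ht).trans (ENNReal.ofReal_le_ofReal ?_)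
  calc _ ≤ K ^ 2 / N / t ^ 2 := by gcongr
    _ = K ^ 2 / (N * t ^ 2) := by rw [div_div]

lemma meas_abs_empiricalDeviation_ge_le_of_ae_abs_le [IsProbabilityMeasure P]
    (hZ : ∀ i, AEMeasurable (Z i) P) (hlaw : ∀ i, P.map (Z i) = μ) {g r : E → ℝ}
    (hr : Integrable r μ) (hgr : ∀ᵐ x ∂μ, |g x| ≤ r x) {N : ℕ} (hN : 0 < N) {t : ℝ} (ht : 0 < t) :
    P {ω | t ≤ |empiricalDeviation μ Z N g ω|} ≤ ENNReal.ofReal (2 * (∫ x, r x ∂μ) / t) := by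
  set Y : Ω → ℝ := fun ω => empiricalMean Z N r ω + ∫ x, r x ∂μ
  have hY_int : Integrable Y P := (integrable_empiricalMean hZ hlaw hr N).add (integrable_const _)
  have hY : ∫ ω, Y ω ∂P = 2 * ∫ x, r x ∂μ := by
    rw [integral_add (integrable_empiricalMean hZ hlaw hr N) (integrable_const _),
      integral_empiricalMean hZ hlaw hr hN, integral_const, probReal_univ, one_smul]
    ring
  have hgr_sample : ∀ᵐ ω ∂P, ∀ i, |g (Z i ω)| ≤ r (Z i ω) :=
    ae_all_iff.2 fun i => ae_of_ae_map (hZ i) ((hlaw i).symm ▸ hgr)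
  have hdev_le : ∀ᵐ ω ∂P, |empiricalDeviation μ Z N g ω| ≤ Y ω := by
    filter_upwards [hgr_sample] with ω hω
    have hmean : |empiricalMean Z N g ω| ≤ empiricalMean Z N r ω := by
      rw [empiricalMean, empiricalMean, abs_mul, abs_inv, Nat.abs_cast]
      gcongr
      exact (Finset.abs_sum_le_sum_abs _ _).trans (Finset.sum_le_sum fun i _ => hω i)
    have hint : ‖∫ x, g x ∂μ‖ ≤ ∫ x, r x ∂μ := norm_integral_le_of_norm_le hr hgr
    exact (abs_sub _ _).trans (add_le_add hmean hint)
  have hY_nonneg : 0 ≤ᵐ[P] Y := hdev_le.mono fun ω hω => (abs_nonneg _).trans hω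
  calc P {ω | t ≤ |empiricalDeviation μ Z N g ω|} ≤ P {ω | t ≤ Y ω} :=
        measure_mono_ae (hdev_le.mono fun ω hω h => le_trans h hω)
    _ = ENNReal.ofReal (P.real {ω | t ≤ Y ω}) := (ofReal_measureReal).symm
    _ ≤ ENNReal.ofReal (2 * (∫ x, r x ∂μ) / t) := by
        gcongr
        rw [le_div_iff₀ ht, mul_comm, ← hY]
        exact mul_meas_ge_le_integral_of_nonneg hY_nonneg hY_int t

lemma meas_abs_empiricalDeviation_gt_le [IsProbabilityMeasure P]
    (hZm : ∀ i, Measurable (Z i)) (hZind : iIndepFun Z P) (hlaw : ∀ i, P.map (Z i) = μ)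
    {g H : E → ℝ} (hgm : Measurable g) (hH : Integrable H μ) (hgH : ∀ᵐ x ∂μ, |g x| ≤ H x)
    {K : ℝ} (hK : 0 ≤ K) {N : ℕ} (hN : 0 < N) {ε : ℝ} (hε : 0 < ε) :
    P {ω | ε < |empiricalDeviation μ Z N g ω|} ≤ ENNReal.ofReal (4 * K ^ 2 / (N * ε ^ 2)) +
      ENNReal.ofReal (4 * (∫ x, max (H x - K) 0 ∂μ) / ε) := by
  have : IsProbabilityMeasure μ := hlaw 0 ▸ Measure.isProbabilityMeasure_map (hZm 0).aemeasurable
  set c : E → ℝ := fun x => max (min (g x) K) (-K)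
  have hcm : Measurable c := (hgm.min measurable_const).max measurable_const
  have hcK : ∀ x, |c x| ≤ K := fun x =>
    abs_le.2 ⟨le_max_right _ _, max_le (min_le_right _ _) (neg_le_self hK)⟩
  have hc : Integrable c μ := .of_bound hcm.aestronglyMeasurable K (ae_of_all _ hcK)
  have hg : Integrable g μ := hH.mono' hgm.aestronglyMeasurable hgH
  have hsplit : ∀ ω, empiricalDeviation μ Z N g ω =
      empiricalDeviation μ Z N c ω + empiricalDeviation μ Z N (fun x => g x - c x) ω := fun ω => by
    rw [← empiricalDeviation_add (h := fun x => g x - c x) hc (hg.sub hc)]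
    simp only [add_sub_cancel]
  have hsub : {ω | ε < |empiricalDeviation μ Z N g ω|} ⊆
      {ω | ε / 2 ≤ |empiricalDeviation μ Z N c ω|} ∪
        {ω | ε / 2 ≤ |empiricalDeviation μ Z N (fun x => g x - c x) ω|} := fun ω hω => by
    by_contra! h
    simp only [Set.mem_union, Set.mem_ofPred_eq, not_or, not_le, hsplit] at h hω
    linarith [abs_add_le (empiricalDeviation μ Z N c ω)
      (empiricalDeviation μ Z N (fun x => g x - c x) ω)]
  have hr : Integrable (fun x => max (H x - K) 0) μ := (hH.sub (integrable_const K)).pos_part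
  refine (measure_mono hsub).trans ((measure_union_le _ _).trans (add_le_add ?_ ?_))
  · refine (meas_abs_empiricalDeviation_ge_le_of_abs_le hZm hZind hlaw hcm hcK hN
      (half_pos hε)).trans_eq (congrArg ENNReal.ofReal ?_)
    field_simp
    ring
  · refine (meas_abs_empiricalDeviation_ge_le_of_ae_abs_le (fun i => (hZm i).aemeasurable) hlaw
      hr (hgH.mono fun x hx => abs_sub_clamp_le hK hx) hN
      (half_pos hε)).trans_eq (congrArg ENNReal.ofReal ?_)
    field_simp
    ring

end

lemma measurable_empiricalDeviation_uncurry {E Ω₁ Ω₂ : Type*} [MeasurableSpace E]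
    [MeasurableSpace Ω₁] [MeasurableSpace Ω₂] {μ : Measure E} [SFinite μ] {Z : ℕ → Ω₂ → E}
    (hZm : ∀ i, Measurable (Z i)) {h : Ω₁ → E → ℝ} (hh : Measurable (Function.uncurry h))
    (N : ℕ) : Measurable fun ω : Ω₁ × Ω₂ => empiricalDeviation μ Z N (h ω.1) ω.2 := by
  refine Measurable.sub (measurable_const.mul (Finset.measurable_sum _ fun i _ =>
    hh.comp (measurable_fst.prodMk ((hZm i).comp measurable_snd)))) ?_
  exact hh.stronglyMeasurable.integral_prod_right'.measurable.comp measurable_fst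

lemma MeasureTheory.Measure.prod_le_add_of_forall_slice_le {Ω₁ Ω₂ : Type*} [MeasurableSpace Ω₁]
    [MeasurableSpace Ω₂] {P₁ : Measure Ω₁} {P₂ : Measure Ω₂} [IsProbabilityMeasure P₁]
    [IsProbabilityMeasure P₂] {A : Set (Ω₁ × Ω₂)} (hA : MeasurableSet A) {S : Set Ω₁} {η : ℝ}
    (hS : ENNReal.ofReal (1 - η) ≤ P₁ S) {b : ℝ≥0∞}
    (hb : ∀ ω₁ ∈ S, P₂ (Prod.mk ω₁ ⁻¹' A) ≤ b) :
    P₁.prod P₂ A ≤ b + ENNReal.ofReal η := by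
  set T : Set Ω₁ := {ω₁ | P₂ (Prod.mk ω₁ ⁻¹' A) ≤ b}
  have hT : MeasurableSet T := measurableSet_le (measurable_measure_prodMk_left hA) measurable_const
  have hTc : P₁ Tᶜ ≤ ENNReal.ofReal η := by
    rw [prob_compl_eq_one_sub hT, tsub_le_iff_right]
    calc (1 : ℝ≥0∞) = ENNReal.ofReal (η + (1 - η)) := by simp
      _ ≤ ENNReal.ofReal η + P₁ T :=
          ENNReal.ofReal_add_le.trans (by gcongr; exact hS.trans (measure_mono hb))
  calc P₁.prod P₂ A = ∫⁻ ω₁, P₂ (Prod.mk ω₁ ⁻¹' A) ∂P₁ := Measure.prod_apply hA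
    _ ≤ ∫⁻ ω₁, b + Tᶜ.indicator 1 ω₁ ∂P₁ := lintegral_mono fun ω₁ => by
        by_cases h : ω₁ ∈ T
        · exact le_add_right h
        · simpa [h] using le_add_left prob_le_one
    _ = b + P₁ Tᶜ := by
        rw [lintegral_add_left measurable_const, lintegral_const, measure_univ, mul_one,
          lintegral_indicator_one hT.compl]
    _ ≤ b + ENNReal.ofReal η := by gcongr

theorem tendsto_prod_meas_abs_empiricalDeviation_gt {E Ω₁ Ω₂ : Type*} [MeasurableSpace E]
    [MeasurableSpace Ω₁] [MeasurableSpace Ω₂] {μ : Measure E} {P₁ : Measure Ω₁}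
    {P₂ : Measure Ω₂} [IsProbabilityMeasure P₁] [IsProbabilityMeasure P₂] {Z : ℕ → Ω₂ → E}
    (hZm : ∀ i, Measurable (Z i)) (hZind : iIndepFun Z P₂) (hlaw : ∀ i, P₂.map (Z i) = μ)
    {h : ℕ → Ω₁ → E → ℝ} (hhm : ∀ N, Measurable (Function.uncurry (h N)))
    (henv : ∀ η : ℝ, 0 < η → ∃ H : E → ℝ, Integrable H μ ∧
      ∀ᶠ N in atTop, ENNReal.ofReal (1 - η) ≤ P₁ {ω₁ | ∀ᵐ x ∂μ, |h N ω₁ x| ≤ H x})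
    {ε : ℝ} (hε : 0 < ε) :
    Tendsto (fun N : ℕ => P₁.prod P₂ {ω | ε < |empiricalDeviation μ Z N (h N ω.1) ω.2|})
      atTop (𝓝 0) := by
  have : IsProbabilityMeasure μ := hlaw 0 ▸ Measure.isProbabilityMeasure_map (hZm 0).aemeasurable
  refine ENNReal.tendsto_nhds_zero_of_eventually_le_ofReal fun η hη => ?_
  obtain ⟨H, hH, hdom⟩ := henv (η / 3) (by positivity)
  obtain ⟨K, hK, htail⟩ : ∃ K : ℝ, 0 ≤ K ∧ 4 * (∫ x, max (H x - K) 0 ∂μ) / ε ≤ η / 3 := by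
    have := ((tendsto_integral_max_sub_atTop_zero hH).const_mul 4).div_const ε
    rw [mul_zero, zero_div] at this
    exact ((eventually_ge_atTop 0).and (this.eventually (ge_mem_nhds (by positivity)))).exists
  have hcheb : Tendsto (fun N : ℕ => 4 * K ^ 2 / (N * ε ^ 2)) atTop (𝓝 0) := by
    refine (tendsto_const_div_atTop_nhds_zero_nat (4 * K ^ 2 / ε ^ 2)).congr fun N => ?_
    rw [div_div, mul_comm (ε ^ 2)]
  filter_upwards [hdom, eventually_gt_atTop 0,
    hcheb.eventually (ge_mem_nhds (by positivity : 0 < η / 3))] with N hNdom hN hNcheb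
  refine (Measure.prod_le_add_of_forall_slice_le
    (measurableSet_lt measurable_const (measurable_empiricalDeviation_uncurry hZm (hhm N) N).abs)
    hNdom fun ω₁ hω₁ => (meas_abs_empiricalDeviation_gt_le hZm hZind hlaw
      (hhm N).of_uncurry_left hH hω₁ hK hN hε).trans (add_le_add (ENNReal.ofReal_le_ofReal hNcheb)
        (ENNReal.ofReal_le_ofReal htail))).trans_eq ?_
  rw [← ENNReal.ofReal_add (by positivity) (by positivity),
    ← ENNReal.ofReal_add (by positivity) (by positivity)]
  congr 1
  ring

theorem stmt14_general (d : ℕ) {Ω₁ Ω₂ : Type} [MeasurableSpace Ω₁] [MeasurableSpace Ω₂]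
    (P₁ : Measure Ω₁) (P₂ : Measure Ω₂) [IsProbabilityMeasure P₁] [IsProbabilityMeasure P₂]
    (μ : Measure (EuclideanSpace ℝ (Fin d))) [IsProbabilityMeasure μ]
    (Z : ℕ → Ω₂ → EuclideanSpace ℝ (Fin d)) (hZm : ∀ i, Measurable (Z i))
    (hZind : iIndepFun Z P₂)
    (hZlaw : ∀ i, P₂.map (Z i) = μ)
    (fN : ℕ → Ω₁ → EuclideanSpace ℝ (Fin d) → ℝ)
    (hfNm : ∀ N, Measurable (Function.uncurry (fN N)))
    (henv : ∀ η : ℝ, 0 < η → ∃ L : ℝ, ∃ G : EuclideanSpace ℝ (Fin d) → ℝ,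
      Integrable (fun x => G x ^ 2) μ ∧
      ∀ᶠ N in atTop,
        ENNReal.ofReal (1 - η) ≤ P₁ {ω₁ | ∀ x, |fN N ω₁ x| ≤ L * G x}) :
    (∀ ε : ℝ, 0 < ε →
      Tendsto (fun (N : ℕ) => (P₁.prod P₂)
        {ω | ε < |(N : ℝ)⁻¹ * ∑ i ∈ Finset.range N, fN N ω.1 (Z i ω.2)
              - ∫ x, fN N ω.1 x ∂μ|}) atTop (nhds 0)) ∧
    (∀ ε : ℝ, 0 < ε →
      Tendsto (fun (N : ℕ) => (P₁.prod P₂)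
        {ω | ε < |(N : ℝ)⁻¹ * ∑ i ∈ Finset.range N, fN N ω.1 (Z i ω.2) ^ 2
              - ∫ x, fN N ω.1 x ^ 2 ∂μ|}) atTop (nhds 0)) := by
  refine ⟨fun ε hε => tendsto_prod_meas_abs_empiricalDeviation_gt hZm hZind hZlaw hfNm ?_ hε,
    fun ε hε => tendsto_prod_meas_abs_empiricalDeviation_gt (h := fun N ω₁ x => fN N ω₁ x ^ 2)
      hZm hZind hZlaw (fun N => (hfNm N).pow_const 2) ?_ hε⟩
  · intro η hη
    obtain ⟨L, G, hG, hdom⟩ := henv η hη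
    refine ⟨fun x => |L| * |G x|, (integrable_abs_of_integrable_sq hG).const_mul _,
      hdom.mono fun N hN => hN.trans (measure_mono fun ω₁ hω₁ => ae_of_all _ fun x => ?_)⟩
    exact (hω₁ x).trans ((le_abs_self _).trans (abs_mul _ _).le)
  · intro η hη
    obtain ⟨L, G, hG, hdom⟩ := henv η hη
    refine ⟨fun x => L ^ 2 * G x ^ 2, hG.const_mul _,
      hdom.mono fun N hN => hN.trans (measure_mono fun ω₁ hω₁ => ae_of_all _ fun x => ?_)⟩
    beta_reduce
    rw [abs_of_nonneg (sq_nonneg _), ← mul_pow, ← sq_abs]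
    exact pow_le_pow_left₀ (abs_nonneg _) (hω₁ x) 2

/-- hold-out law of large numbers for a random function `f_N`
independent of the i.i.d. evaluation sample (independence encoded by placing
the random function and the sample on the two factors of a product probability
space). Both the centered empirical mean of `f_N` and of `f_N²` converge to
zero in probability. -/
theorem stmt14 (d : ℕ) {Ω₁ Ω₂ : Type} [MeasurableSpace Ω₁] [MeasurableSpace Ω₂]
    (P₁ : Measure Ω₁) (P₂ : Measure Ω₂) [IsProbabilityMeasure P₁] [IsProbabilityMeasure P₂]
    (μ : Measure (EuclideanSpace ℝ (Fin d))) [IsProbabilityMeasure μ]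
    (Z : ℕ → Ω₂ → EuclideanSpace ℝ (Fin d)) (hZm : ∀ i, Measurable (Z i))
    (hZind : iIndepFun Z P₂)
    (hZlaw : ∀ i, P₂.map (Z i) = μ)
    (fN : ℕ → Ω₁ → EuclideanSpace ℝ (Fin d) → ℝ)
    (hfNm : ∀ N, Measurable (Function.uncurry (fN N)))
    (f : EuclideanSpace ℝ (Fin d) → ℝ) (hf : MemLp f 2 μ)
    (hL2conv : ∀ ε : ℝ, 0 < ε →
      Tendsto (fun N => P₁ {ω₁ | ε < ∫ x, (fN N ω₁ x - f x) ^ 2 ∂μ}) atTop (nhds 0))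
    (henv : ∀ η : ℝ, 0 < η → ∃ L : ℝ, ∃ G : EuclideanSpace ℝ (Fin d) → ℝ,
      Integrable (fun x => G x ^ 2) μ ∧
      ∀ᶠ N in atTop,
        ENNReal.ofReal (1 - η) ≤ P₁ {ω₁ | ∀ x, |fN N ω₁ x| ≤ L * G x}) :
    (∀ ε : ℝ, 0 < ε →
      Tendsto (fun (N : ℕ) => (P₁.prod P₂)
        {ω | ε < |(N : ℝ)⁻¹ * ∑ i ∈ Finset.range N, fN N ω.1 (Z i ω.2)
              - ∫ x, fN N ω.1 x ∂μ|}) atTop (nhds 0)) ∧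
    (∀ ε : ℝ, 0 < ε →
      Tendsto (fun (N : ℕ) => (P₁.prod P₂)
        {ω | ε < |(N : ℝ)⁻¹ * ∑ i ∈ Finset.range N, fN N ω.1 (Z i ω.2) ^ 2
              - ∫ x, fN N ω.1 x ^ 2 ∂μ|}) atTop (nhds 0)) :=
  stmt14_general d P₁ P₂ μ Z hZm hZind hZlaw fN hfNm henv
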